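/- arXiv:2406.12853 — 6 statements merged into one kernel-verified Lean document; each statement's English description precedes it below -/
import Mathlib

section
/- Let y(τ) = 4·arctan(e^τ) − π, let N be a positive natural number, and let r̄, A_1, …, A_N be real numbers. Then the Melnikov integral M = ∫_ℝ y'(τ)·( r̄ − Σ_{k=1}^{N} A_k·(y'(τ))^k ) dτ converges and equals 2π·r̄ − Σ_{k=1}^{N} A_k·2^k·I_k, where I_k = 2·√π·Γ((k+1)/2) / Γ((k+2)/2). Consequently M = 0 if and only if 2π·r̄ = Σ_{k=1}^{N} A_k·2^k·I_k. -/
open MeasureTheory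

lemma sin_pow_integral_gamma : ∀ n : ℕ,
    (∫ x in (0:ℝ)..Real.pi, Real.sin x ^ n) =
      Real.sqrt Real.pi * Real.Gamma (((n : ℝ) + 1) / 2) / Real.Gamma (((n : ℝ) + 2) / 2)
  | 0 => by
    simp only [Nat.cast_zero, pow_zero, zero_add]
    rw [intervalIntegral.integral_const, show ((2:ℝ))/2 = 1 by norm_num, Real.Gamma_one,
      Real.Gamma_one_half_eq]
    simp [Real.mul_self_sqrt Real.pi_pos.le]
  | 1 => by
    have h32 : Real.Gamma ((3:ℝ)/2) = (1/2) * Real.sqrt Real.pi := by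
      have : ((3:ℝ)/2) = 1/2 + 1 := by norm_num
      rw [this, Real.Gamma_add_one (by norm_num), Real.Gamma_one_half_eq]
    have hπ : Real.sqrt Real.pi ≠ 0 := by positivity
    norm_num [integral_sin, h32, Real.Gamma_one]
    field_simp
  | (n + 2) => by
    have key := sin_pow_integral_gamma n
    rw [integral_sin_pow, key]
    have h1 : ((n : ℝ) + 1) / 2 ≠ 0 := by positivity
    have h2 : ((n : ℝ) + 2) / 2 ≠ 0 := by positivity
    have G1 : Real.Gamma (((((n:ℕ) + 2 : ℕ)) : ℝ) + 1) / 2 = 0 ∨ True := Or.inr trivial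
    have GA : Real.Gamma (((((n:ℕ) + 2 : ℕ) : ℝ) + 1) / 2) =
        ((n : ℝ) + 1) / 2 * Real.Gamma (((n : ℝ) + 1) / 2) := by
      have : ((((n:ℕ) + 2 : ℕ) : ℝ) + 1) / 2 = ((n : ℝ) + 1) / 2 + 1 := by push_cast; ring
      rw [this, Real.Gamma_add_one h1]
    have GB : Real.Gamma (((((n:ℕ) + 2 : ℕ) : ℝ) + 2) / 2) =
        ((n : ℝ) + 2) / 2 * Real.Gamma (((n : ℝ) + 2) / 2) := by
      have : ((((n:ℕ) + 2 : ℕ) : ℝ) + 2) / 2 = ((n : ℝ) + 2) / 2 + 1 := by push_cast; ring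
      rw [this, Real.Gamma_add_one h2]
    have hΓ2 : Real.Gamma (((n : ℝ) + 2) / 2) ≠ 0 :=
      ne_of_gt (Real.Gamma_pos_of_pos (by positivity))
    rw [GA, GB]
    have hn2 : ((n:ℝ) + 2) ≠ 0 := by positivity
    field_simp
    simp only [Real.sin_zero, Real.sin_pi, zero_mul, sub_zero]
    ring

lemma coskey_aux (k : ℕ) : (∫ u in (-(Real.pi/2))..(Real.pi/2), Real.cos u ^ k)
    = ∫ x in (0:ℝ)..Real.pi, Real.sin x ^ k := by
  have h := intervalIntegral.integral_comp_add_right (a := -(Real.pi/2)) (b := Real.pi/2)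
    (fun x => Real.sin x ^ k) (Real.pi/2)
  simp only [Real.sin_add_pi_div_two] at h
  rw [h]
  norm_num

lemma interval_calc_aux (N : ℕ) (rbar : ℝ) (B : ℕ → ℝ) :
    (∫ u in (-(Real.pi/2))..(Real.pi/2),
        (2 * rbar - ∑ k ∈ Finset.Icc 1 N, B k * Real.cos u ^ k))
      = 2 * Real.pi * rbar
        - ∑ k ∈ Finset.Icc 1 N, B k * ∫ x in (0:ℝ)..Real.pi, Real.sin x ^ k := by
  have hInt : IntervalIntegrable
      (fun u => ∑ k ∈ Finset.Icc 1 N, B k * Real.cos u ^ k) volume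
      (-(Real.pi/2)) (Real.pi/2) :=
    Continuous.intervalIntegrable
      (continuous_finset_sum _ fun k _ =>
        continuous_const.mul (Real.continuous_cos.pow k)) _ _
  have hsub := intervalIntegral.integral_sub (μ := volume) (a := -(Real.pi/2))
    (b := Real.pi/2) (f := fun _ : ℝ => 2 * rbar)
    (g := fun u => ∑ k ∈ Finset.Icc 1 N, B k * Real.cos u ^ k)
    intervalIntegrable_const hInt
  rw [hsub]
  beta_reduce
  rw [intervalIntegral.integral_finset_sum
    (f := fun k u => B k * Real.cos u ^ k) (fun k _ =>
    (Continuous.intervalIntegrable (continuous_const.mul (Real.continuous_cos.pow k)) _ _))]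
  congr 1
  · simp; ring
  · exact Finset.sum_congr rfl fun k _ => by
      rw [intervalIntegral.integral_const_mul, coskey_aux k]

set_option maxHeartbeats 1000000 in
/-- Evaluation of the Melnikov integral along the pendulum separatrix
`y(τ) = 4 arctan(e^τ) − π`: it converges, equals `2π r̄ − Σ A_k 2^k I_k`, and vanishes
iff `2π r̄ = Σ A_k 2^k I_k`. -/
theorem melnikov_integral_along_separatrix (N : ℕ) (hN : 0 < N) (rbar : ℝ) (A : ℕ → ℝ) :
    let y : ℝ → ℝ := fun τ => 4 * Real.arctan (Real.exp τ) - Real.pi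
    let I : ℕ → ℝ := fun k =>
      2 * Real.sqrt Real.pi * Real.Gamma (((k : ℝ) + 1) / 2) / Real.Gamma (((k : ℝ) + 2) / 2)
    let M : ℝ :=
      ∫ τ : ℝ, deriv y τ * (rbar - ∑ k ∈ Finset.Icc 1 N, A k * (deriv y τ) ^ k)
    Integrable
      (fun τ : ℝ => deriv y τ * (rbar - ∑ k ∈ Finset.Icc 1 N, A k * (deriv y τ) ^ k)) ∧
    M = 2 * Real.pi * rbar - ∑ k ∈ Finset.Icc 1 N, A k * 2 ^ k * I k ∧
    (M = 0 ↔ 2 * Real.pi * rbar = ∑ k ∈ Finset.Icc 1 N, A k * 2 ^ k * I k) := by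
  intro y I M
  -- the angle variable θ = y/2 and its derivative φ
  set θ : ℝ → ℝ := fun τ => 2 * Real.arctan (Real.exp τ) - Real.pi / 2 with hθdef
  set φ : ℝ → ℝ := fun τ => 2 * (Real.exp τ / (1 + Real.exp τ ^ 2)) with hφdef
  have hθ : ∀ τ, HasDerivAt θ (φ τ) τ := by
    intro τ
    have h1 : HasDerivAt (fun t => Real.arctan (Real.exp t))
        (1 / (1 + Real.exp τ ^ 2) * Real.exp τ) τ :=
      (Real.hasDerivAt_arctan (Real.exp τ)).comp τ (Real.hasDerivAt_exp τ)
    have h2 := (h1.const_mul 2).sub_const (Real.pi / 2)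
    refine h2.congr_deriv ?_
    show 2 * (1 / (1 + Real.exp τ ^ 2) * Real.exp τ) = 2 * (Real.exp τ / (1 + Real.exp τ ^ 2)); ring
  have hφpos : ∀ τ, 0 < φ τ := by
    intro τ; have := Real.exp_pos τ; positivity
  have hφcos : ∀ τ, φ τ = Real.cos (θ τ) := by
    intro τ
    have hx : (0:ℝ) < 1 + Real.exp τ ^ 2 := by positivity
    have hs : Real.sqrt (1 + Real.exp τ ^ 2) * Real.sqrt (1 + Real.exp τ ^ 2)
        = 1 + Real.exp τ ^ 2 := Real.mul_self_sqrt hx.le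
    have hsne : Real.sqrt (1 + Real.exp τ ^ 2) ≠ 0 := by positivity
    show 2 * (Real.exp τ / (1 + Real.exp τ ^ 2))
        = Real.cos (2 * Real.arctan (Real.exp τ) - Real.pi / 2)
    rw [Real.cos_sub_pi_div_two, Real.sin_two_mul, Real.sin_arctan, Real.cos_arctan,
      mul_assoc, div_mul_div_comm, mul_one, hs]
  have hdy : ∀ τ, deriv y τ = 2 * φ τ := by
    intro τ
    have h1 : HasDerivAt (fun t => Real.arctan (Real.exp t))
        (1 / (1 + Real.exp τ ^ 2) * Real.exp τ) τ :=
      (Real.hasDerivAt_arctan (Real.exp τ)).comp τ (Real.hasDerivAt_exp τ)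
    have h2 := (h1.const_mul 4).sub_const Real.pi
    have h3 : HasDerivAt y (2 * φ τ) τ := by
      refine h2.congr_deriv ?_
      show 4 * (1 / (1 + Real.exp τ ^ 2) * Real.exp τ) = 2 * (2 * (Real.exp τ / (1 + Real.exp τ ^ 2))); ring
    exact h3.deriv
  -- the substituted function
  set H : ℝ → ℝ := fun u =>
    2 * rbar - ∑ k ∈ Finset.Icc 1 N, (2 * (A k * 2 ^ k)) * Real.cos u ^ k with hHdef
  have hHcont : Continuous H := by
    apply Continuous.sub continuous_const
    exact continuous_finset_sum _ fun k _ =>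
      continuous_const.mul (Real.continuous_cos.pow k)
  -- the integrand equals |φ| • H ∘ θ
  have hfe : (fun τ : ℝ => deriv y τ * (rbar - ∑ k ∈ Finset.Icc 1 N, A k * (deriv y τ) ^ k))
      = fun τ => |φ τ| • H (θ τ) := by
    funext τ
    rw [hdy τ, hφcos τ, smul_eq_mul, abs_of_pos (by rw [← hφcos]; exact hφpos τ)]
    simp only [hHdef, hφcos τ, mul_sub, Finset.mul_sum, mul_pow]
    congr 1
    · ring
    · refine Finset.sum_congr rfl fun k _ => ?_
      ring
  have hmeas : MeasurableSet (Set.univ : Set ℝ) := MeasurableSet.univ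
  have hderivW : ∀ x ∈ (Set.univ : Set ℝ), HasDerivWithinAt θ (φ x) Set.univ x :=
    fun x _ => (hθ x).hasDerivWithinAt
  have hmono : StrictMono θ :=
    strictMono_of_deriv_pos fun x => by rw [(hθ x).deriv]; exact hφpos x
  have hinj : Set.InjOn θ Set.univ := hmono.injective.injOn
  have hrange : θ '' Set.univ = Set.Ioo (-(Real.pi / 2)) (Real.pi / 2) := by
    rw [Set.image_univ]
    ext u
    simp only [Set.mem_range, Set.mem_Ioo]
    constructor
    · rintro ⟨τ, rfl⟩
      have h1 : 0 < Real.arctan (Real.exp τ) := by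
        rw [← Real.arctan_zero]; exact Real.arctan_strictMono (Real.exp_pos τ)
      have h2 : Real.arctan (Real.exp τ) < Real.pi / 2 := Real.arctan_lt_pi_div_two _
      constructor <;> (simp only [hθdef]; nlinarith)
    · rintro ⟨h1, h2⟩
      refine ⟨Real.log (Real.tan ((u + Real.pi / 2) / 2)), ?_⟩
      have ha1 : 0 < (u + Real.pi / 2) / 2 := by linarith
      have ha2 : (u + Real.pi / 2) / 2 < Real.pi / 2 := by linarith
      have htp : 0 < Real.tan ((u + Real.pi / 2) / 2) :=
        Real.tan_pos_of_pos_of_lt_pi_div_two ha1 ha2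
      simp only [hθdef]
      rw [Real.exp_log htp, Real.arctan_tan (by linarith) ha2]
      ring
  -- integrability of H on the image interval
  have hHint : IntegrableOn H (Set.Ioo (-(Real.pi / 2)) (Real.pi / 2)) :=
    (hHcont.integrableOn_Icc).mono_set Set.Ioo_subset_Icc_self
  have hkey := integral_image_eq_integral_abs_deriv_smul hmeas hderivW hinj H
  have hkeyInt := (integrableOn_image_iff_integrableOn_abs_deriv_smul hmeas hderivW hinj H)
  rw [hrange] at hkey hkeyInt
  have hint : Integrable
      (fun τ : ℝ => deriv y τ * (rbar - ∑ k ∈ Finset.Icc 1 N, A k * (deriv y τ) ^ k)) := by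
    rw [hfe]
    exact integrableOn_univ.mp (hkeyInt.mp hHint)
  have hMval : M = 2 * Real.pi * rbar - ∑ k ∈ Finset.Icc 1 N, A k * 2 ^ k * I k := by
    have step1 : M = ∫ u in Set.Ioo (-(Real.pi / 2)) (Real.pi / 2), H u := by
      show (∫ τ : ℝ, deriv y τ * (rbar - ∑ k ∈ Finset.Icc 1 N, A k * (deriv y τ) ^ k)) = _
      rw [hfe, ← setIntegral_univ, hkey]
    have step2 : (∫ u in Set.Ioo (-(Real.pi / 2)) (Real.pi / 2), H u)
        = ∫ u in (-(Real.pi/2))..(Real.pi/2), H u := by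
      rw [intervalIntegral.integral_of_le (by linarith [Real.pi_pos]),
        MeasureTheory.integral_Ioc_eq_integral_Ioo]
    rw [step1, step2]
    simp only [hHdef]
    rw [interval_calc_aux N rbar (fun k => 2 * (A k * 2 ^ k))]
    congr 1
    refine Finset.sum_congr rfl fun k _ => ?_
    rw [sin_pow_integral_gamma k]
    simp only [I]
    ring
  refine ⟨hint, hMval, ?_⟩
  rw [hMval]
  constructor
  · intro h; linarith
  · intro h; linarith
end

section
/- Let γ > 0 and r̄ ∈ (−1, 0), set y₁ = π − arcsin(r̄), and define V(y) = 2·(cos y + 2γ·sin y)/(1 + 4γ²) − r̄/γ. Then V(y₁) = 0 if and only if 1/r̄² = 1 + 1/(4γ²); equivalently, if and only if r̄ = −2γ/√(1 + 4γ²). -/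
/-- Spyrou's surf-riding threshold condition: the heteroclinic orbit
`V(y) = 2(cos y + 2γ sin y)/(1+4γ²) − r̄/γ` terminates at the saddle
`y₁ = π − arcsin r̄` (i.e. `V(y₁) = 0`) iff `1/r̄² = 1 + 1/(4γ²)`,
equivalently iff `r̄ = −2γ/√(1+4γ²)`. -/
theorem spyrou_surfriding_threshold (γ rbar : ℝ) (hγ : 0 < γ)
    (hr : rbar ∈ Set.Ioo (-1 : ℝ) 0) :
    let y₁ : ℝ := Real.pi - Real.arcsin rbar
    let V : ℝ → ℝ := fun y =>
      2 * (Real.cos y + 2 * γ * Real.sin y) / (1 + 4 * γ ^ 2) - rbar / γ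
    (V y₁ = 0 ↔ 1 / rbar ^ 2 = 1 + 1 / (4 * γ ^ 2)) ∧
    (V y₁ = 0 ↔ rbar = -2 * γ / Real.sqrt (1 + 4 * γ ^ 2)) := by
  obtain ⟨hr1, hr0⟩ := hr
  intro y₁ V
  have hγ2 : (0:ℝ) < 1 + 4 * γ ^ 2 := by nlinarith
  have hr2 : rbar ^ 2 < 1 := by nlinarith
  have hrne : rbar ≠ 0 := ne_of_lt hr0
  set s := Real.sqrt (1 - rbar ^ 2) with hs
  have hs2 : s ^ 2 = 1 - rbar ^ 2 := Real.sq_sqrt (by nlinarith)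
  have hspos : 0 < s := Real.sqrt_pos.mpr (by nlinarith)
  set t := Real.sqrt (1 + 4 * γ ^ 2) with ht
  have ht2 : t ^ 2 = 1 + 4 * γ ^ 2 := Real.sq_sqrt (le_of_lt hγ2)
  have htpos : 0 < t := Real.sqrt_pos.mpr hγ2
  have hcos : Real.cos y₁ = -s := by
    simp only [y₁, Real.cos_pi_sub, Real.cos_arcsin, hs]
  have hsin : Real.sin y₁ = rbar := by
    show Real.sin (Real.pi - Real.arcsin rbar) = rbar
    rw [Real.sin_pi_sub]
    exact Real.sin_arcsin (le_of_lt hr1) (by linarith)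
  have key : V y₁ = 0 ↔ 2 * γ * s = -rbar := by
    simp only [V, hcos, hsin, sub_eq_zero]
    rw [div_eq_div_iff (ne_of_gt hγ2) (ne_of_gt hγ)]
    constructor
    · intro h; nlinarith
    · intro h; nlinarith
  constructor
  · rw [key]
    constructor
    · intro h
      have hsq : 4 * γ ^ 2 * s ^ 2 = rbar ^ 2 := by nlinarith
      field_simp
      nlinarith
    · intro h
      have h' : 4 * γ ^ 2 = rbar ^ 2 * (4 * γ ^ 2) + rbar ^ 2 := by
        field_simp at h
        nlinarith
      have hfac : (2 * γ * s + rbar) * (2 * γ * s - rbar) = 0 := by nlinarith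
      have hpos : 0 < 2 * γ * s - rbar := by nlinarith [mul_pos hγ hspos]
      rcases mul_eq_zero.mp hfac with h'' | h''
      · linarith
      · linarith
  · rw [key]
    constructor
    · intro h
      have hsq : 4 * γ ^ 2 * s ^ 2 = rbar ^ 2 := by
        linear_combination (2 * γ * s - rbar) * h
      have hst2 : (s * t) ^ 2 = 1 := by
        linear_combination s ^ 2 * ht2 + hs2 + hsq
      have hst : s * t = 1 := by
        have hfac : (s * t - 1) * (s * t + 1) = 0 := by linear_combination hst2
        have hp : 0 < s * t + 1 := by positivity
        rcases mul_eq_zero.mp hfac with h'' | h''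
        · linarith
        · linarith
      have hr' : rbar = -(2 * γ * s) := by linarith
      rw [eq_div_iff (ne_of_gt htpos), hr']
      linear_combination (-2 * γ) * hst
    · intro h
      have hrt : rbar * t = -2 * γ := by
        rw [h, div_mul_cancel₀ _ (ne_of_gt htpos)]
      have h4 : rbar ^ 2 * t ^ 2 = 4 * γ ^ 2 := by
        linear_combination (rbar * t - 2 * γ) * hrt
      have hst2 : (s * t) ^ 2 = 1 := by
        linear_combination t ^ 2 * hs2 + ht2 - h4
      have hst : s * t = 1 := by
        have hfac : (s * t - 1) * (s * t + 1) = 0 := by linear_combination hst2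
        have hp : 0 < s * t + 1 := by positivity
        rcases mul_eq_zero.mp hfac with h'' | h''
        · linarith
        · linarith
      have hz : (2 * γ * s + rbar) * t = 0 := by
        linear_combination 2 * γ * hst + hrt
      rcases mul_eq_zero.mp hz with h'' | h''
      · linarith
      · exact absurd h'' (ne_of_gt htpos)
end

section
/- Let β, μ, a, c be real numbers with μ = 2c² and c² + β·c = μ·a, and let y : ℝ → ℝ be differentiable with y'(τ) = c·y(τ)·(1 − y(τ)) for all τ. Then y is twice differentiable and y''(τ) + β·y'(τ) + μ·y(τ)·(1 − y(τ))·(y(τ) − a) = 0 for all τ. Conversely, if c ≠ 0, y'(τ) = c·y(τ)·(1 − y(τ)) for all τ, y takes some value in the open interval (0, 1), and y''(τ) + β·y'(τ) + μ·y(τ)·(1 − y(τ))·(y(τ) − a) = 0 for all τ, then μ = 2c² and c² + β·c = μ·a. -/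
/-- The parabolic ansatz `y' = c y (1 − y)` solves the FitzHugh–Nagumo-type equation
`y'' + β y' + μ y (1 − y)(y − a) = 0` exactly when `μ = 2c²` and `c² + βc = μa`. -/
theorem fitzhugh_nagumo_parabolic_ansatz (β μ a c : ℝ) (y : ℝ → ℝ)
    (hy : Differentiable ℝ y)
    (hansatz : ∀ τ : ℝ, deriv y τ = c * y τ * (1 - y τ)) :
    ((μ = 2 * c ^ 2 ∧ c ^ 2 + β * c = μ * a) →
      Differentiable ℝ (deriv y) ∧
      ∀ τ : ℝ, deriv (deriv y) τ + β * deriv y τ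
          + μ * y τ * (1 - y τ) * (y τ - a) = 0) ∧
    ((c ≠ 0 ∧ (∃ τ₀ : ℝ, y τ₀ ∈ Set.Ioo (0 : ℝ) 1) ∧
        (∀ τ : ℝ, deriv (deriv y) τ + β * deriv y τ
          + μ * y τ * (1 - y τ) * (y τ - a) = 0)) →
      (μ = 2 * c ^ 2 ∧ c ^ 2 + β * c = μ * a)) := by
  have hyd : ∀ τ, HasDerivAt y (c * y τ * (1 - y τ)) τ := by
    intro τ
    have := (hy τ).hasDerivAt
    rwa [hansatz τ] at this
  have hdy : deriv y = fun t => c * y t * (1 - y t) := funext hansatz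
  have hg : ∀ τ, HasDerivAt (fun t => c * y t * (1 - y t))
      (c * (c * y τ * (1 - y τ)) * (1 - 2 * y τ)) τ := by
    intro τ
    have h : HasDerivAt (fun t => c * y t * (1 - y t))
        (c * (c * y τ * (1 - y τ)) * (1 - y τ) + c * y τ * (0 - c * y τ * (1 - y τ))) τ :=
      (((hyd τ).const_mul c).mul ((hasDerivAt_const τ (1:ℝ)).sub (hyd τ)))
    convert h using 1
    ring
  have hd2 : ∀ τ, deriv (deriv y) τ = c * (c * y τ * (1 - y τ)) * (1 - 2 * y τ) := by
    intro τ
    rw [hdy]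
    exact (hg τ).deriv
  constructor
  · rintro ⟨hμ, hβ⟩
    constructor
    · rw [hdy]
      exact fun τ => (hg τ).differentiableAt
    · intro τ
      rw [hd2 τ, hansatz τ]
      linear_combination (y τ * (1 - y τ) * y τ) * hμ + (y τ * (1 - y τ)) * hβ
  · rintro ⟨hc, ⟨τ₀, h01⟩, heq⟩
    have key : ∀ τ, y τ ∈ Set.Ioo (0:ℝ) 1 →
        (μ - 2 * c ^ 2) * y τ = -(c ^ 2 + β * c - μ * a) := by
      intro τ hτ
      have h := heq τ
      rw [hd2 τ, hansatz τ] at h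
      have hne : y τ * (1 - y τ) ≠ 0 := by
        have h1 := hτ.1; have h2 := hτ.2; nlinarith
      have hfac : y τ * (1 - y τ) *
          ((μ - 2 * c ^ 2) * y τ + (c ^ 2 + β * c - μ * a)) = 0 := by
        linear_combination h
      rcases mul_eq_zero.mp hfac with h' | h'
      · exact absurd h' hne
      · linarith
    have hev : ∀ᶠ τ in nhds τ₀, y τ ∈ Set.Ioo (0:ℝ) 1 :=
      (hy.continuous.continuousAt).preimage_mem_nhds
        (Ioo_mem_nhds h01.1 h01.2)
    have heqF : (fun τ => (μ - 2 * c ^ 2) * y τ) =ᶠ[nhds τ₀]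
        (fun _ => -(c ^ 2 + β * c - μ * a)) :=
      hev.mono fun τ hτ => key τ hτ
    have hderiv0 : deriv (fun τ => (μ - 2 * c ^ 2) * y τ) τ₀ = 0 := by
      rw [Filter.EventuallyEq.deriv_eq heqF]
      exact deriv_const _ _
    have hder : deriv (fun τ => (μ - 2 * c ^ 2) * y τ) τ₀
        = (μ - 2 * c ^ 2) * (c * y τ₀ * (1 - y τ₀)) :=
      ((hyd τ₀).const_mul (μ - 2 * c ^ 2)).deriv
    rw [hder] at hderiv0
    have hne : c * y τ₀ * (1 - y τ₀) ≠ 0 := by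
      have := h01.1; have := h01.2
      have : y τ₀ * (1 - y τ₀) > 0 := by nlinarith
      intro h
      rcases mul_eq_zero.mp (by rw [mul_assoc] at h; exact h) with h' | h'
      · exact hc h'
      · nlinarith
    have hμ : μ = 2 * c ^ 2 := by
      rcases mul_eq_zero.mp hderiv0 with h' | h'
      · linarith
      · exact absurd h' hne
    refine ⟨hμ, ?_⟩
    have := key τ₀ h01
    rw [hμ] at this ⊢
    linarith [this]
end

section
/- Let c > 0 and 0 < β < c, and for each natural number n ≥ 1 define I_n = c^n·∫_ℝ exp((β − n·c)·τ)/(1 + exp(−c·τ))^{2n} dτ. Then each I_n converges and satisfies the recurrence I_{n+1} = −(β² − n²·c²)/(2n·(2n+1)·c) · I_n for all n ≥ 1. -/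
open MeasureTheory Real Filter Set Topology

namespace MelnikovAux

noncomputable def f (c a : ℝ) (m : ℕ) : ℝ → ℝ :=
  fun τ => Real.exp (a * τ) / (1 + Real.exp (-c * τ)) ^ m

lemma continuous_f (c a : ℝ) (m : ℕ) : Continuous (f c a m) := by
  apply Continuous.div (by continuity) (by continuity)
  intro τ
  positivity

lemma tendsto_exp_mul_zero {r : ℝ} (hr : r < 0) :
    Tendsto (fun τ : ℝ => Real.exp (r * τ)) atTop (𝓝 0) :=
  Real.tendsto_exp_atBot.comp ((tendsto_const_mul_atBot_of_neg hr).2 tendsto_id)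

lemma tendsto_exp_mul_zero_bot {r : ℝ} (hr : 0 < r) :
    Tendsto (fun τ : ℝ => Real.exp (r * τ)) atBot (𝓝 0) :=
  Real.tendsto_exp_atBot.comp ((tendsto_const_mul_atBot_of_pos hr).2 tendsto_id)

lemma f_symm (c a : ℝ) (m : ℕ) (τ : ℝ) : f c a m τ = f (-c) (a + m * c) m τ := by
  unfold f
  rw [neg_neg]
  have h1 : (1 : ℝ) + Real.exp (c * τ) = Real.exp (c * τ) * (1 + Real.exp (-c * τ)) := by
    rw [mul_add, mul_one, ← Real.exp_add]
    have h0 : c * τ + -c * τ = 0 := by ring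
    rw [h0, Real.exp_zero]
    ring
  have h2 : Real.exp ((a + m * c) * τ) = Real.exp (a * τ) * Real.exp (c * τ) ^ m := by
    rw [← Real.exp_nat_mul, ← Real.exp_add]
    ring_nf
  rw [h1, h2, mul_pow]
  rw [mul_comm (Real.exp (a * τ)) (Real.exp (c * τ) ^ m),
    mul_div_mul_left _ _ (by positivity : Real.exp (c * τ) ^ m ≠ 0)]

lemma tendsto_f_atTop {c a : ℝ} (hc : 0 < c) (ha : a < 0) (m : ℕ) :
    Tendsto (f c a m) atTop (𝓝 0) := by
  have h1 : Tendsto (fun τ : ℝ => Real.exp (a * τ)) atTop (𝓝 0) := tendsto_exp_mul_zero ha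
  have h2 : Tendsto (fun τ : ℝ => Real.exp (-c * τ)) atTop (𝓝 0) :=
    tendsto_exp_mul_zero (by linarith)
  have h3 : Tendsto (fun τ : ℝ => ((1 + Real.exp (-c * τ)) ^ m)⁻¹) atTop (𝓝 1) := by
    have h4 : Tendsto (fun τ : ℝ => (1 + Real.exp (-c * τ)) ^ m) atTop (𝓝 1) := by
      have := (h2.const_add 1).pow m
      simpa using this
    simpa using h4.inv₀ one_ne_zero
  have := h1.mul h3
  unfold f
  simpa [div_eq_mul_inv, neg_mul] using this

lemma tendsto_f_atBot {c a : ℝ} (hc : 0 < c) {m : ℕ} (ham : 0 < a + m * c) :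
    Tendsto (f c a m) atBot (𝓝 0) := by
  have heq : f c a m = fun τ => f (-c) (a + m * c) m τ := funext fun τ => f_symm c a m τ
  rw [heq]
  unfold f
  rw [neg_neg]
  have h1 : Tendsto (fun τ : ℝ => Real.exp ((a + m * c) * τ)) atBot (𝓝 0) :=
    tendsto_exp_mul_zero_bot ham
  have h2 : Tendsto (fun τ : ℝ => Real.exp (c * τ)) atBot (𝓝 0) :=
    tendsto_exp_mul_zero_bot hc
  have h3 : Tendsto (fun τ : ℝ => ((1 + Real.exp (c * τ)) ^ m)⁻¹) atBot (𝓝 1) := by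
    have h4 : Tendsto (fun τ : ℝ => (1 + Real.exp (c * τ)) ^ m) atBot (𝓝 1) := by
      have := (h2.const_add 1).pow m
      simpa using this
    simpa using h4.inv₀ one_ne_zero
  have := h1.mul h3
  simpa [div_eq_mul_inv] using this

lemma integrableOn_exp_Iic {b : ℝ} (hb : 0 < b) (x : ℝ) :
    IntegrableOn (fun τ : ℝ => Real.exp (b * τ)) (Iic x) := by
  rw [← (Measure.measurePreserving_neg (volume : Measure ℝ)).integrableOn_comp_preimage
      (Homeomorph.neg ℝ).measurableEmbedding]
  simp only [Function.comp_def, neg_preimage, neg_Iic, mul_neg, ← neg_mul]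
  exact (integrableOn_Ici_iff_integrableOn_Ioi (by simp)).2 (exp_neg_integrableOn_Ioi _ hb)

lemma f_nonneg (c a : ℝ) (m : ℕ) (τ : ℝ) : 0 ≤ f c a m τ := by
  unfold f; positivity

lemma f_le_exp (c a : ℝ) (m : ℕ) (τ : ℝ) : f c a m τ ≤ Real.exp (a * τ) := by
  unfold f
  rw [div_le_iff₀ (by positivity)]
  have h1 : (1 : ℝ) ≤ (1 + Real.exp (-c * τ)) ^ m := by
    calc (1 : ℝ) = 1 ^ m := (one_pow m).symm
    _ ≤ (1 + Real.exp (-c * τ)) ^ m :=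
        pow_le_pow_left₀ (by norm_num) (by nlinarith [Real.exp_pos (-c * τ)]) m
  nlinarith [Real.exp_pos (a * τ)]

lemma f_le_exp' (c a : ℝ) (m : ℕ) (τ : ℝ) : f c a m τ ≤ Real.exp ((a + m * c) * τ) := by
  unfold f
  have hE : (0 : ℝ) < Real.exp (-c * τ) := Real.exp_pos _
  have h1 : Real.exp (-c * τ) ^ m ≤ (1 + Real.exp (-c * τ)) ^ m :=
    pow_le_pow_left₀ (le_of_lt hE) (by linarith) m
  have h2 : Real.exp (a * τ) / (1 + Real.exp (-c * τ)) ^ m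
      ≤ Real.exp (a * τ) / Real.exp (-c * τ) ^ m :=
    div_le_div_of_nonneg_left (le_of_lt (Real.exp_pos _)) (by positivity) h1
  refine h2.trans (le_of_eq ?_)
  rw [← Real.exp_nat_mul, ← Real.exp_sub]
  ring_nf

lemma integrable_f {c a : ℝ} (hc : 0 < c) {m : ℕ} (ha : a < 0) (ham : 0 < a + m * c) :
    Integrable (f c a m) := by
  rw [← integrableOn_univ, ← Set.Iic_union_Ioi (a := (0 : ℝ)), integrableOn_union]
  constructor
  · apply Integrable.mono' (integrableOn_exp_Iic ham 0)
    · exact (continuous_f c a m).aestronglyMeasurable.restrict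
    · filter_upwards with τ
      rw [Real.norm_eq_abs, abs_of_nonneg (f_nonneg c a m τ)]
      exact f_le_exp' c a m τ
  · have hint : IntegrableOn (fun τ : ℝ => Real.exp (a * τ)) (Ioi 0) := by
      have := exp_neg_integrableOn_Ioi (0 : ℝ) (neg_pos.2 ha)
      simpa using this
    apply Integrable.mono' hint
    · exact (continuous_f c a m).aestronglyMeasurable.restrict
    · filter_upwards with τ
      rw [Real.norm_eq_abs, abs_of_nonneg (f_nonneg c a m τ)]
      exact f_le_exp c a m τ

lemma shift (c a : ℝ) (m : ℕ) (τ : ℝ) :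
    f c (a - c) (m + 1) τ = f c a m τ - f c a (m + 1) τ := by
  unfold f
  have h : (0 : ℝ) < 1 + Real.exp (-c * τ) := by positivity
  have e1 : Real.exp ((a - c) * τ) = Real.exp (a * τ) * Real.exp (-c * τ) := by
    rw [← Real.exp_add]; ring_nf
  rw [e1]
  field_simp
  ring

lemma hasDerivAt_f (c a : ℝ) {m : ℕ} (hm : 1 ≤ m) (τ : ℝ) :
    HasDerivAt (f c a m)
      (a * f c a m τ + (m * c) * (f c a m τ - f c a (m + 1) τ)) τ := by
  obtain ⟨k, rfl⟩ : ∃ k, m = k + 1 := ⟨m - 1, (Nat.succ_pred_eq_of_pos hm).symm⟩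
  have h : (0 : ℝ) < 1 + Real.exp (-c * τ) := by positivity
  have hu : HasDerivAt (fun τ : ℝ => Real.exp (a * τ)) (Real.exp (a * τ) * a) τ := by
    simpa using ((hasDerivAt_id τ).const_mul a).exp
  have hinner : HasDerivAt (fun τ : ℝ => 1 + Real.exp (-c * τ))
      (Real.exp (-c * τ) * (-c)) τ := by
    simpa using (((hasDerivAt_id τ).const_mul (-c)).exp).const_add 1
  have hv : HasDerivAt (fun τ : ℝ => (1 + Real.exp (-c * τ)) ^ (k + 1))
      ((k + 1 : ℕ) * (1 + Real.exp (-c * τ)) ^ k * (Real.exp (-c * τ) * (-c))) τ := by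
    simpa using hinner.fun_pow (k + 1)
  have hd := hu.div hv (by positivity)
  refine hd.congr_deriv ?_
  unfold f
  have hE : (0 : ℝ) < Real.exp (-c * τ) := Real.exp_pos _
  push_cast
  field_simp
  ring

lemma ibp {c a : ℝ} (hc : 0 < c) {m : ℕ} (hm : 1 ≤ m) (ha : a < 0) (ham : 0 < a + m * c) :
    (a + m * c) * ∫ τ : ℝ, f c a m τ = (m * c) * ∫ τ : ℝ, f c a (m + 1) τ := by
  have hint1 : Integrable (f c a m) := integrable_f hc ha ham
  have hint2 : Integrable (f c a (m + 1)) := by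
    apply integrable_f hc ha
    push_cast
    nlinarith
  have hA : Integrable (fun τ => a * f c a m τ) := hint1.const_mul a
  have hB : Integrable (fun τ => ((m : ℝ) * c) * (f c a m τ - f c a (m + 1) τ)) :=
    (hint1.sub hint2).const_mul _
  have hF'int : Integrable (fun τ => a * f c a m τ
      + ((m : ℝ) * c) * (f c a m τ - f c a (m + 1) τ)) := hA.add hB
  have hzero : (∫ τ : ℝ, (a * f c a m τ
      + ((m : ℝ) * c) * (f c a m τ - f c a (m + 1) τ))) = 0 := by
    have := integral_of_hasDerivAt_of_tendsto (f := f c a m)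
      (fun τ => hasDerivAt_f c a hm τ) hF'int (tendsto_f_atBot hc ham)
      (tendsto_f_atTop hc ha m)
    simpa using this
  rw [integral_add hA hB, integral_const_mul, integral_const_mul,
    integral_sub hint1 hint2] at hzero
  linear_combination hzero

lemma shift_integral {c a : ℝ} (hc : 0 < c) {m : ℕ} (ha : a < 0) (ham : 0 < a + m * c) :
    (∫ τ : ℝ, f c (a - c) (m + 1) τ)
      = (∫ τ : ℝ, f c a m τ) - ∫ τ : ℝ, f c a (m + 1) τ := by
  have hint1 : Integrable (f c a m) := integrable_f hc ha ham
  have hint2 : Integrable (f c a (m + 1)) := by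
    apply integrable_f hc ha
    push_cast
    nlinarith
  rw [show f c (a - c) (m + 1) = fun τ => f c a m τ - f c a (m + 1) τ from
    funext fun τ => shift c a m τ]
  exact integral_sub hint1 hint2

end MelnikovAux

open MelnikovAux in
/-- The Melnikov integrals `I_n = c^n ∫_ℝ e^{(β−nc)τ}/(1+e^{−cτ})^{2n} dτ` converge for
`n ≥ 1` and satisfy the integration-by-parts recurrence
`I_{n+1} = −(β² − n²c²)/(2n(2n+1)c) · I_n`. -/
theorem melnikov_integral_recurrence (c β : ℝ) (hc : 0 < c) (hβ : 0 < β) (hβc : β < c) :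
    let I : ℕ → ℝ := fun n =>
      c ^ n * ∫ τ : ℝ, Real.exp ((β - (n : ℝ) * c) * τ) / (1 + Real.exp (-c * τ)) ^ (2 * n)
    (∀ n : ℕ, 1 ≤ n →
      Integrable
        (fun τ : ℝ => Real.exp ((β - (n : ℝ) * c) * τ) / (1 + Real.exp (-c * τ)) ^ (2 * n))) ∧
    (∀ n : ℕ, 1 ≤ n →
      I (n + 1) = -((β ^ 2 - (n : ℝ) ^ 2 * c ^ 2) / (2 * (n : ℝ) * (2 * (n : ℝ) + 1) * c)) * I n) := by
  intro I
  have hInt : ∀ n : ℕ, 1 ≤ n →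
      Integrable
        (fun τ : ℝ => Real.exp ((β - (n : ℝ) * c) * τ) / (1 + Real.exp (-c * τ)) ^ (2 * n)) := by
    intro n hn
    have hN : (1 : ℝ) ≤ (n : ℝ) := by exact_mod_cast hn
    have h : Integrable (f c (β - (n : ℝ) * c) (2 * n)) := by
      apply integrable_f hc
      · nlinarith
      · push_cast
        nlinarith
    exact h
  refine ⟨hInt, ?_⟩
  intro n hn
  have hN : (1 : ℝ) ≤ (n : ℝ) := by exact_mod_cast hn
  have ha : β - (n : ℝ) * c < 0 := by nlinarith
  have h2n : 0 < (β - (n : ℝ) * c) + ((2 * n : ℕ) : ℝ) * c := by push_cast; nlinarith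
  have h2n1 : 0 < (β - (n : ℝ) * c) + ((2 * n + 1 : ℕ) : ℝ) * c := by push_cast; nlinarith
  have e1 := ibp hc (a := β - (n : ℝ) * c) (m := 2 * n) (by omega) ha h2n
  have e2 := ibp hc (a := β - (n : ℝ) * c) (m := 2 * n + 1) (by omega) ha h2n1
  have e3 := shift_integral hc (a := β - (n : ℝ) * c) (m := 2 * n + 1) ha h2n1
  push_cast at e1 e2
  simp only [I]
  have hIeq : (fun τ : ℝ => Real.exp ((β - ((n + 1 : ℕ) : ℝ) * c) * τ)
      / (1 + Real.exp (-c * τ)) ^ (2 * (n + 1)))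
      = f c ((β - (n : ℝ) * c) - c) (2 * n + 1 + 1) := by
    funext τ
    unfold f
    have h1 : β - ((n + 1 : ℕ) : ℝ) * c = (β - (n : ℝ) * c) - c := by push_cast; ring
    have h2 : 2 * (n + 1) = 2 * n + 1 + 1 := by ring
    rw [h1, h2]
  have hIn : (fun τ : ℝ => Real.exp ((β - (n : ℝ) * c) * τ)
      / (1 + Real.exp (-c * τ)) ^ (2 * n)) = f c (β - (n : ℝ) * c) (2 * n) := rfl
  rw [hIeq, hIn, e3]
  have hD : (2 * (n : ℝ) * (2 * (n : ℝ) + 1) * c) ≠ 0 :=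
    ne_of_gt (by nlinarith : (0 : ℝ) < 2 * (n : ℝ) * (2 * (n : ℝ) + 1) * c)
  rw [show -((β ^ 2 - (n : ℝ) ^ 2 * c ^ 2) / (2 * (n : ℝ) * (2 * (n : ℝ) + 1) * c))
      * (c ^ n * ∫ τ : ℝ, f c (β - (n : ℝ) * c) (2 * n) τ)
      = (-(β ^ 2 - (n : ℝ) ^ 2 * c ^ 2)
        * (c ^ n * ∫ τ : ℝ, f c (β - (n : ℝ) * c) (2 * n) τ))
        / (2 * (n : ℝ) * (2 * (n : ℝ) + 1) * c) from by ring,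
    eq_div_iff hD]
  linear_combination (c ^ n * (β - (n : ℝ) * c)) * e1 + (c ^ n * (2 * (n : ℝ) * c)) * e2
end

section
/- Let c > 0 and 0 < β < c, and for each natural number n ≥ 1 define I_n = c^n·∫_ℝ exp((β − n·c)·τ)/(1 + exp(−c·τ))^{2n} dτ. Then I_n = π·β·∏_{j=1}^{n−1}(j²·c² − β²) / ((2n−1)!·c^n·sin(π·β/c)) for every n ≥ 1 (the empty product for n = 1 being 1). -/
open Real MeasureTheory
open Real MeasureTheory

lemma realBeta (a b : ℝ) (ha : 0 < a) (hb : 0 < b) :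
    ∫ y in Set.Ioo (0:ℝ) 1, y ^ (a-1) * (1-y) ^ (b-1) =
      Real.Gamma a * Real.Gamma b / Real.Gamma (a+b) := by
  have key : Complex.Gamma a * Complex.Gamma b
      = Complex.Gamma (a+b) * Complex.betaIntegral a b := by
    have := Complex.Gamma_mul_Gamma_eq_betaIntegral (s := (a:ℂ)) (t := (b:ℂ))
      (by simpa using ha) (by simpa using hb)
    simpa using this
  have hbeta : Complex.betaIntegral a b
      = ((∫ y in (0:ℝ)..1, y ^ (a-1) * (1-y) ^ (b-1) : ℝ) : ℂ) := by
    rw [Complex.betaIntegral]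
    rw [← intervalIntegral.integral_ofReal]
    apply intervalIntegral.integral_congr
    intro x hx
    rw [Set.uIcc_of_le (by norm_num : (0:ℝ) ≤ 1)] at hx
    have hx0 : 0 ≤ x := hx.1
    have hx1 : 0 ≤ 1 - x := by linarith [hx.2]
    push_cast
    rw [Complex.ofReal_cpow hx0, Complex.ofReal_cpow hx1]
    push_cast
    ring
  have hIoo : ∫ y in Set.Ioo (0:ℝ) 1, y ^ (a-1) * (1-y) ^ (b-1)
      = ∫ y in (0:ℝ)..1, y ^ (a-1) * (1-y) ^ (b-1) := by
    rw [intervalIntegral.integral_of_le (by norm_num : (0:ℝ) ≤ 1),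
      MeasureTheory.integral_Ioc_eq_integral_Ioo]
  rw [hbeta] at key
  rw [show ((a:ℂ)+b) = ((a+b:ℝ):ℂ) by push_cast; ring, Complex.Gamma_ofReal] at key
  simp only [Complex.Gamma_ofReal] at key
  have key' : Real.Gamma a * Real.Gamma b
      = Real.Gamma (a+b) * ∫ y in (0:ℝ)..1, y ^ (a-1) * (1-y) ^ (b-1) := by
    exact_mod_cast key
  have hG : Real.Gamma (a+b) ≠ 0 := (Real.Gamma_pos_of_pos (by linarith)).ne'
  rw [hIoo]
  field_simp
  linarith [key']

lemma melnikov_subst (c β : ℝ) (hc : 0 < c) (n : ℕ) :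
    ∫ τ : ℝ, Real.exp ((β - (n:ℝ) * c) * τ) / (1 + Real.exp (-c * τ)) ^ (2 * n)
      = (1/c) * ∫ y in Set.Ioo (0:ℝ) 1,
          y ^ (((n:ℝ) + β/c) - 1) * (1-y) ^ (((n:ℝ) - β/c) - 1) := by
  set f : ℝ → ℝ := fun τ => (1 + Real.exp (-c * τ))⁻¹ with hf
  set f' : ℝ → ℝ := fun τ => c * Real.exp (-c * τ) / (1 + Real.exp (-c * τ)) ^ 2 with hf'
  have hEpos : ∀ τ : ℝ, 0 < Real.exp (-c * τ) := fun τ => Real.exp_pos _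
  have hden : ∀ τ : ℝ, 0 < 1 + Real.exp (-c * τ) := fun τ => by linarith [hEpos τ]
  have hderiv : ∀ τ : ℝ, HasDerivAt f (f' τ) τ := by
    intro τ
    have h1 : HasDerivAt (fun τ : ℝ => -c * τ) (-c) τ := by
      simpa using (hasDerivAt_id τ).const_mul (-c)
    have h2 : HasDerivAt (fun τ : ℝ => Real.exp (-c * τ)) (Real.exp (-c * τ) * -c) τ := h1.exp
    have h3 : HasDerivAt (fun τ : ℝ => 1 + Real.exp (-c * τ))
        (Real.exp (-c * τ) * -c) τ := h2.const_add 1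
    have h4 := h3.inv (hden τ).ne'
    convert h4 using 1
    show c * Real.exp (-c * τ) / (1 + Real.exp (-c * τ)) ^ 2 = _
    ring
    all_goals rfl
  have hinj : Set.InjOn f Set.univ := by
    intro τ₁ _ τ₂ _ h
    have h2 : 1 + Real.exp (-c * τ₁) = 1 + Real.exp (-c * τ₂) :=
      inv_injective h
    have h3 : Real.exp (-c * τ₁) = Real.exp (-c * τ₂) := by linarith
    have h4 : -c * τ₁ = -c * τ₂ := Real.exp_eq_exp.mp h3
    exact mul_left_cancel₀ (by linarith : (-c) ≠ 0) h4
  have himg : f '' Set.univ = Set.Ioo (0:ℝ) 1 := by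
    ext y
    simp only [Set.image_univ, Set.mem_range, Set.mem_Ioo]
    constructor
    · rintro ⟨τ, rfl⟩
      constructor
      · exact inv_pos.mpr (hden τ)
      · rw [inv_lt_one_iff₀]
        right; linarith [hEpos τ]
    · rintro ⟨hy0, hy1⟩
      refine ⟨-(1/c) * Real.log ((1-y)/y), ?_⟩
      have hq : 0 < (1-y)/y := div_pos (by linarith) hy0
      have : -c * (-(1/c) * Real.log ((1-y)/y)) = Real.log ((1-y)/y) := by
        field_simp
      rw [hf]; simp only []
      rw [this, Real.exp_log hq]
      field_simp
      ring
  have key := integral_image_eq_integral_abs_deriv_smul (s := Set.univ) (f := f) (f' := f')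
    MeasurableSet.univ (fun x _ => (hderiv x).hasDerivWithinAt)
    hinj (fun y => y ^ (((n:ℝ) + β/c) - 1) * (1-y) ^ (((n:ℝ) - β/c) - 1))
  rw [himg, MeasureTheory.Measure.restrict_univ] at key
  rw [key]
  rw [← MeasureTheory.integral_const_mul]
  congr 1
  ext τ
  set E := Real.exp (-c * τ) with hE
  have hEp : 0 < E := hEpos τ
  have hdp : 0 < 1 + E := hden τ
  have hy : (0:ℝ) < (1 + E)⁻¹ := inv_pos.mpr hdp
  have h1y : 1 - (1 + E)⁻¹ = E * (1 + E)⁻¹ := by field_simp; ring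
  have habs : |f' τ| = c * E / (1 + E) ^ 2 := by
    rw [abs_of_pos]
    positivity
  rw [smul_eq_mul, habs, hf]
  simp only []
  rw [h1y]
  have hy' : (0:ℝ) < E * (1+E)⁻¹ := mul_pos hEp hy
  have Li : ∀ r : ℝ, ((1 + E)⁻¹) ^ r = Real.exp (-(Real.log (1+E)) * r) := by
    intro r
    rw [Real.rpow_def_of_pos (inv_pos.mpr hdp), Real.log_inv]
  have LEm : ∀ r : ℝ, (E * (1+E)⁻¹) ^ r = Real.exp ((-c*τ - Real.log (1+E)) * r) := by
    intro r
    rw [Real.rpow_def_of_pos hy', Real.log_mul hEp.ne' (inv_pos.mpr hdp).ne', Real.log_inv,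
      hE, Real.log_exp]
    ring_nf
  have Ln : (1 + E) ^ (2*n : ℕ) = Real.exp (Real.log (1+E) * (2*(n:ℝ))) := by
    rw [← Real.rpow_natCast (1+E) (2*n), Real.rpow_def_of_pos hdp]
    push_cast; ring_nf
  have L2 : (1 + E) ^ (2 : ℕ) = Real.exp (Real.log (1+E) * 2) := by
    rw [← Real.rpow_natCast (1+E) 2, Real.rpow_def_of_pos hdp]
    norm_num
  have hEe : E = Real.exp (-c*τ) := hE
  rw [Li, LEm, Ln, L2]
  simp only [hE, div_eq_mul_inv, ← Real.exp_neg, mul_assoc, ← Real.exp_add]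
  rw [one_mul, inv_mul_cancel_left₀ hc.ne', Real.exp_eq_exp]
  field_simp
  ring

lemma gamma_prod (s : ℝ) (h0 : 0 < s) (h1 : s < 1) : ∀ n : ℕ,
    Real.Gamma ((n:ℝ)+1+s) * Real.Gamma ((n:ℝ)+1-s) =
      (∏ j ∈ Finset.Icc 1 n, ((j:ℝ)^2 - s^2)) * (Real.Gamma (1+s) * Real.Gamma (1-s)) := by
  intro n
  induction n with
  | zero => simp
  | succ n ih =>
    have hp : Real.Gamma (((n+1:ℕ)):ℝ) = 0 ∨ True := Or.inr trivial
    have hps : ((n:ℝ)+1+s) ≠ 0 := by positivity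
    have hms : ((n:ℝ)+1-s) ≠ 0 := by nlinarith
    have e1 : ((n+1:ℕ):ℝ)+1+s = ((n:ℝ)+1+s) + 1 := by push_cast; ring
    have e2 : ((n+1:ℕ):ℝ)+1-s = ((n:ℝ)+1-s) + 1 := by push_cast; ring
    rw [e1, e2, Real.Gamma_add_one hps, Real.Gamma_add_one hms,
      Finset.prod_Icc_succ_top (Nat.succ_le_succ (Nat.zero_le n))]
    push_cast
    nlinarith [ih]

/-- Closed form for the Melnikov integrals along the logistic heteroclinic orbit:
`I_n = πβ ∏_{j=1}^{n−1}(j²c² − β²) / ((2n−1)! c^n sin(πβ/c))` for all `n ≥ 1`. -/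
theorem melnikov_integral_closed_form (c β : ℝ) (hc : 0 < c) (hβ : 0 < β) (hβc : β < c) :
    let I : ℕ → ℝ := fun n =>
      c ^ n * ∫ τ : ℝ, Real.exp ((β - (n : ℝ) * c) * τ) / (1 + Real.exp (-c * τ)) ^ (2 * n)
    ∀ n : ℕ, 1 ≤ n →
      I n = Real.pi * β * (∏ j ∈ Finset.Icc 1 (n - 1), ((j : ℝ) ^ 2 * c ^ 2 - β ^ 2))
        / (((2 * n - 1).factorial : ℝ) * c ^ n * Real.sin (Real.pi * β / c)) := by
  intro I n hn
  obtain ⟨m, rfl⟩ : ∃ m, n = m + 1 := ⟨n - 1, (Nat.succ_pred_eq_of_pos hn).symm⟩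
  set s : ℝ := β / c with hs
  have hs0 : 0 < s := div_pos hβ hc
  have hs1 : s < 1 := (div_lt_one hc).mpr hβc
  -- the integral via substitution and Beta
  have hsub := melnikov_subst c β hc (m + 1)
  have ha : (0:ℝ) < ((m+1:ℕ):ℝ) + β / c := by positivity
  have hb : (0:ℝ) < ((m+1:ℕ):ℝ) - β / c := by
    push_cast
    rw [← hs]
    nlinarith
  have hbeta := realBeta (((m+1:ℕ):ℝ) + β / c) (((m+1:ℕ):ℝ) - β / c) ha hb
  -- Gamma of the sum is a factorial
  have hsum : ((m+1:ℕ):ℝ) + β / c + (((m+1:ℕ):ℝ) - β / c) = ((2*m+1 : ℕ):ℝ) + 1 := by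
    push_cast; ring
  have hfac : Real.Gamma (((m+1:ℕ):ℝ) + β / c + (((m+1:ℕ):ℝ) - β / c))
      = ((2*m+1).factorial : ℝ) := by
    rw [hsum, Real.Gamma_nat_eq_factorial]
  -- Gamma product
  have hgp := gamma_prod s hs0 hs1 m
  have hcast1 : ((m+1:ℕ):ℝ) + β / c = (m:ℝ) + 1 + s := by push_cast; rw [hs]
  have hcast2 : ((m+1:ℕ):ℝ) - β / c = (m:ℝ) + 1 - s := by push_cast; rw [hs]
  -- reflection formula
  have hrefl : Real.Gamma (1+s) * Real.Gamma (1-s) = s * (Real.pi / Real.sin (Real.pi * s)) := by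
    rw [show (1:ℝ) + s = s + 1 by ring, Real.Gamma_add_one hs0.ne', mul_assoc,
      Real.Gamma_mul_Gamma_one_sub]
  -- product conversion
  have hprod : (∏ j ∈ Finset.Icc 1 m, ((j : ℝ) ^ 2 * c ^ 2 - β ^ 2))
      = c^(2*m) * ∏ j ∈ Finset.Icc 1 m, ((j : ℝ) ^ 2 - s ^ 2) := by
    have hc2 : ∀ j ∈ Finset.Icc 1 m, (j:ℝ)^2 * c^2 - β^2 = c^2 * ((j:ℝ)^2 - s^2) := by
      intro j _
      rw [hs]; field_simp
    rw [Finset.prod_congr rfl hc2, Finset.prod_mul_distrib, Finset.prod_const,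
      Nat.card_Icc, Nat.add_sub_cancel, ← pow_mul]
  have hfe : 2*(m+1)-1 = 2*m+1 := by omega
  have hsinne : Real.sin (Real.pi * (β/c)) ≠ 0 := by
    refine ne_of_gt (Real.sin_pos_of_pos_of_lt_pi (by positivity) ?_)
    have := Real.pi_pos
    nlinarith
  have hfacne : (((2*m+1).factorial : ℕ) : ℝ) ≠ 0 := Nat.cast_ne_zero.mpr (Nat.factorial_ne_zero _)
  simp only [I]
  simp only [Nat.add_sub_cancel]
  rw [hsub, hbeta, hfac, hcast1, hcast2, hgp, hrefl, hprod, hfe, hs]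
  rw [show Real.pi * β / c = Real.pi * (β/c) by ring]
  generalize (∏ j ∈ Finset.Icc 1 m, ((j:ℝ)^2 - (β/c)^2)) = P
  generalize hK : (((2*m+1).factorial : ℕ) : ℝ) = K at hfacne ⊢
  generalize hS : Real.sin (Real.pi * (β/c)) = S at hsinne ⊢
  field_simp
  ring
end

section
/- Let c > 0 and 0 < β < c, and for each natural number n ≥ 0 define K_n = c·∫_ℝ exp((β − c)·τ)/(1 + exp(−c·τ))^{n+2} dτ. Then K_n = π·β·∏_{j=1}^{n}(j·c + β) / ((n+1)!·c^{n+1}·sin(π·β/c)) for every n ≥ 0 (the empty product for n = 0 being 1). -/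
open MeasureTheory Set

lemma real_beta_integral (a b : ℝ) (ha : 0 < a) (hb : 0 < b) :
    ∫ x in Ioo (0:ℝ) 1, x ^ (a-1) * (1-x) ^ (b-1) =
      Real.Gamma a * Real.Gamma b / Real.Gamma (a+b) := by
  set I : ℝ := ∫ x in (0:ℝ)..1, x ^ (a-1) * (1-x) ^ (b-1) with hI
  have hcongr : Complex.betaIntegral a b = (I : ℂ) := by
    rw [Complex.betaIntegral, hI, ← intervalIntegral.integral_ofReal]
    refine intervalIntegral.integral_congr (fun x hx => ?_)
    rw [Set.uIcc_of_le zero_le_one] at hx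
    rw [Complex.ofReal_mul, Complex.ofReal_cpow hx.1,
      Complex.ofReal_cpow (by linarith [hx.2] : (0:ℝ) ≤ 1 - x)]
    push_cast
    ring
  have key := Complex.Gamma_mul_Gamma_eq_betaIntegral
    (s := (a:ℂ)) (t := (b:ℂ)) (by simpa using ha) (by simpa using hb)
  rw [hcongr, ← Complex.ofReal_add, Complex.Gamma_ofReal, Complex.Gamma_ofReal,
    Complex.Gamma_ofReal, ← Complex.ofReal_mul, ← Complex.ofReal_mul] at key
  have keyR : Real.Gamma a * Real.Gamma b = Real.Gamma (a+b) * I := by exact_mod_cast key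
  have hG : Real.Gamma (a+b) ≠ 0 := (Real.Gamma_pos_of_pos (by linarith)).ne'
  have : I = Real.Gamma a * Real.Gamma b / Real.Gamma (a+b) := by
    field_simp [keyR]
    rw [keyR]; ring
  rw [← this, hI, intervalIntegral.integral_of_le zero_le_one, integral_Ioc_eq_integral_Ioo]

lemma melnikov_cov (c β : ℝ) (hc : 0 < c) (hβ : 0 < β) (hβc : β < c) (n : ℕ) :
    ∫ x in Ioo (0:ℝ) 1, x ^ ((n:ℝ) + β/c) * (1-x) ^ (-(β/c)) =
      c * ∫ τ : ℝ, Real.exp ((β - c) * τ) / (1 + Real.exp (-c * τ)) ^ (n + 2) := by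
  set s : ℝ := β / c with hs
  have hs0 : 0 < s := div_pos hβ hc
  have hs1 : s < 1 := (div_lt_one hc).2 hβc
  have hcs : c * s = β := by rw [hs]; field_simp
  set f : ℝ → ℝ := fun τ => (1 + Real.exp (-c * τ))⁻¹ with hf
  set f' : ℝ → ℝ := fun τ => c * Real.exp (-c * τ) / (1 + Real.exp (-c * τ)) ^ 2 with hf'
  have hEpos : ∀ τ : ℝ, 0 < Real.exp (-c * τ) := fun τ => Real.exp_pos _
  have hHpos : ∀ τ : ℝ, 0 < 1 + Real.exp (-c * τ) := fun τ => by positivity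
  have hd : ∀ τ : ℝ, HasDerivAt f (f' τ) τ := by
    intro τ
    have h1 : HasDerivAt (fun τ : ℝ => -c * τ) (-c) τ := by
      simpa using (hasDerivAt_id τ).const_mul (-c)
    have h2 := h1.exp
    have h3 := h2.const_add 1
    have h4 := h3.inv (hHpos τ).ne'
    refine h4.congr_deriv ?_
    simp only [hf']
    ring
  have hinj : Function.Injective f := by
    intro τ₁ τ₂ h
    simp only [hf] at h
    have h2 : Real.exp (-c * τ₁) = Real.exp (-c * τ₂) := by
      have := inv_injective h
      linarith
    have := Real.exp_injective h2
    have hcne : c ≠ 0 := hc.ne'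
    field_simp at this
    linarith
  have himg : f '' univ = Ioo (0:ℝ) 1 := by
    ext t
    simp only [image_univ, mem_range, mem_Ioo]
    constructor
    · rintro ⟨τ, rfl⟩
      constructor
      · exact inv_pos.2 (hHpos τ)
      · rw [inv_lt_one_iff₀]
        right; linarith [hEpos τ]
    · rintro ⟨ht0, ht1⟩
      refine ⟨-Real.log ((1 - t) / t) / c, ?_⟩
      have : -c * (-Real.log ((1 - t) / t) / c) = Real.log ((1 - t) / t) := by
        field_simp
      rw [hf]
      simp only [this]
      rw [Real.exp_log (div_pos (by linarith) ht0)]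
      rw [show 1 + (1 - t) / t = t⁻¹ by field_simp; ring, inv_inv]
  have hpt : ∀ τ : ℝ, |f' τ| * ((f τ) ^ ((n:ℝ) + s) * (1 - f τ) ^ (-s)) =
      c * (Real.exp ((β - c) * τ) / (1 + Real.exp (-c * τ)) ^ (n + 2)) := by
    intro τ
    set E : ℝ := Real.exp (-c * τ) with hE
    have hE0 : 0 < E := hEpos τ
    set H : ℝ := 1 + E with hH
    have hH0 : 0 < H := hHpos τ
    have habs : |f' τ| = c * E / H ^ 2 := by
      rw [abs_of_pos]; positivity
    have hfτ : f τ = H⁻¹ := rfl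
    have h1f : 1 - f τ = E / H := by
      rw [hfτ]; rw [hH]; field_simp; ring
    have hexp : Real.exp ((β - c) * τ) = E ^ ((1:ℝ) - s) := by
      rw [Real.rpow_def_of_pos hE0, Real.log_exp]
      congr 1
      rw [hs]; field_simp; ring
    rw [habs, hfτ, h1f, hexp]
    rw [Real.inv_rpow hH0.le, Real.div_rpow hE0.le hH0.le,
      Real.rpow_add hH0 (n:ℝ) s, Real.rpow_neg hE0.le, Real.rpow_neg hH0.le,
      Real.rpow_sub hE0, Real.rpow_one,
      show H ^ (n + 2) = H ^ ((n:ℝ)) * H ^ 2 by rw [pow_add, Real.rpow_natCast]]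
    have p1 : (0:ℝ) < H ^ ((n:ℝ)) := Real.rpow_pos_of_pos hH0 _
    have p2 : (0:ℝ) < H ^ s := Real.rpow_pos_of_pos hH0 _
    have p3 : (0:ℝ) < E ^ s := Real.rpow_pos_of_pos hE0 _
    field_simp
  calc ∫ x in Ioo (0:ℝ) 1, x ^ ((n:ℝ) + s) * (1-x) ^ (-s)
      = ∫ x in f '' univ, x ^ ((n:ℝ) + s) * (1-x) ^ (-s) := by rw [himg]
    _ = ∫ τ in univ, |f' τ| • ((f τ) ^ ((n:ℝ) + s) * (1 - f τ) ^ (-s)) :=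
        integral_image_eq_integral_abs_deriv_smul MeasurableSet.univ
          (fun x _ => (hd x).hasDerivWithinAt) hinj.injOn _
    _ = ∫ τ : ℝ, |f' τ| * ((f τ) ^ ((n:ℝ) + s) * (1 - f τ) ^ (-s)) := by
        rw [Measure.restrict_univ]; rfl
    _ = ∫ τ : ℝ, c * (Real.exp ((β - c) * τ) / (1 + Real.exp (-c * τ)) ^ (n + 2)) := by
        exact integral_congr_ae (Filter.Eventually.of_forall hpt)
    _ = c * ∫ τ : ℝ, Real.exp ((β - c) * τ) / (1 + Real.exp (-c * τ)) ^ (n + 2) :=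
        MeasureTheory.integral_const_mul c _

lemma melnikov_Gamma_shift (s : ℝ) (hs : 0 < s) : ∀ n : ℕ,
    Real.Gamma ((n:ℝ) + 1 + s) = (∏ j ∈ Finset.Icc 1 n, ((j:ℝ) + s)) * Real.Gamma (1 + s) := by
  intro n
  induction n with
  | zero => simp
  | succ n ih =>
      have h1 : ((n+1:ℕ):ℝ) + 1 + s = ((n:ℝ) + 1 + s) + 1 := by push_cast; ring
      rw [h1, Real.Gamma_add_one (by positivity), ih,
        Finset.prod_Icc_succ_top (Nat.le_add_left 1 n)]
      push_cast
      ring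

/-- Closed form for the integrals `K_n = c ∫_ℝ e^{(β−c)τ}/(1+e^{−cτ})^{n+2} dτ`:
`K_n = πβ ∏_{j=1}^{n}(jc + β) / ((n+1)! c^{n+1} sin(πβ/c))` for all `n ≥ 0`. -/
theorem melnikov_K_integral_closed_form (c β : ℝ) (hc : 0 < c) (hβ : 0 < β) (hβc : β < c) :
    let K : ℕ → ℝ := fun n =>
      c * ∫ τ : ℝ, Real.exp ((β - c) * τ) / (1 + Real.exp (-c * τ)) ^ (n + 2)
    ∀ n : ℕ,
      K n = Real.pi * β * (∏ j ∈ Finset.Icc 1 n, ((j : ℝ) * c + β))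
        / (((n + 1).factorial : ℝ) * c ^ (n + 1) * Real.sin (Real.pi * β / c)) := by
  intro K n
  set s : ℝ := β / c with hs
  have hs0 : 0 < s := div_pos hβ hc
  have hs1 : s < 1 := (div_lt_one hc).2 hβc
  have hcs : c * s = β := by rw [hs]; field_simp
  have hbeta := real_beta_integral ((n:ℝ) + 1 + s) (1 - s) (by positivity) (by linarith)
  rw [show ((n:ℝ) + 1 + s) - 1 = (n:ℝ) + s by ring, show (1 - s) - 1 = -s by ring] at hbeta
  have hcov := melnikov_cov c β hc hβ hβc n
  have hKn : K n = ∫ x in Ioo (0:ℝ) 1, x ^ ((n:ℝ) + s) * (1-x) ^ (-s) := hcov.symm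
  rw [hKn, hbeta]
  -- compute the Gammas
  have hG1 : Real.Gamma ((n:ℝ) + 1 + s) =
      (∏ j ∈ Finset.Icc 1 n, ((j:ℝ) + s)) * (s * Real.Gamma s) := by
    rw [melnikov_Gamma_shift s hs0 n, show (1:ℝ) + s = s + 1 by ring,
      Real.Gamma_add_one hs0.ne']
  have hG2 : Real.Gamma ((n:ℝ) + 1 + s + (1 - s)) = ((n+1).factorial : ℝ) := by
    rw [show (n:ℝ) + 1 + s + (1 - s) = ((n+1:ℕ):ℝ) + 1 by push_cast; ring,
      Real.Gamma_nat_eq_factorial]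
  have hrefl : Real.Gamma s * Real.Gamma (1 - s) = Real.pi / Real.sin (Real.pi * s) :=
    Real.Gamma_mul_Gamma_one_sub s
  rw [hG1, hG2]
  -- the product identity
  have hprod : (∏ j ∈ Finset.Icc 1 n, ((j:ℝ) * c + β)) =
      c ^ n * ∏ j ∈ Finset.Icc 1 n, ((j:ℝ) + s) := by
    calc ∏ j ∈ Finset.Icc 1 n, ((j:ℝ) * c + β)
        = ∏ j ∈ Finset.Icc 1 n, (c * ((j:ℝ) + s)) :=
          Finset.prod_congr rfl (fun j _ => by rw [← hcs]; ring)
      _ = c ^ n * ∏ j ∈ Finset.Icc 1 n, ((j:ℝ) + s) := by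
          rw [Finset.prod_mul_distrib, Finset.prod_const, Nat.card_Icc]
          simp
  have hsinarg : Real.pi * β / c = Real.pi * s := by rw [hs]; ring
  rw [hprod, hsinarg]
  have hsin : Real.sin (Real.pi * s) ≠ 0 := by
    refine (Real.sin_pos_of_pos_of_lt_pi (by positivity) ?_).ne'
    nlinarith [Real.pi_pos]
  have hfac : (((n+1).factorial : ℕ) : ℝ) ≠ 0 := by positivity
  have hkey : (∏ j ∈ Finset.Icc 1 n, ((j:ℝ) + s)) * (s * Real.Gamma s) * Real.Gamma (1 - s)
      = (∏ j ∈ Finset.Icc 1 n, ((j:ℝ) + s)) * s * (Real.pi / Real.sin (Real.pi * s)) := by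
    rw [← hrefl]; ring
  rw [hkey, ← hcs]
  field_simp
  ring
end
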